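/- arXiv:2507.15780 — 6 statements merged into one kernel-verified Lean document; each statement's English description precedes it below -/
import Mathlib

section
/- The polynomials F_n satisfy the linear recurrence F_{n+1}(X) = X·F_n(X) − F_{n−1}(X) for all n ≥ 1. -/
open Polynomial

noncomputable def TT : ℕ → ℤ[X]
  | 0 => 2
  | 1 => Polynomial.X
  | (k+2) => Polynomial.X * TT (k+1) - TT k

noncomputable def F (n : ℕ) : ℤ[X] := 1 + ∑ k ∈ Finset.Icc 1 n, TT k

lemma F_zero : F 0 = 1 := by
  simp [F]

lemma F_succ (n : ℕ) : F (n + 1) = F n + TT (n + 1) := by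
  rw [F, F, Finset.sum_Icc_succ_top (Nat.le_add_left 1 n), add_assoc]

/-- `F` inherits the Chebyshev recurrence from `TT`, since `F (m + 3) - F (m + 2)` and
`F (m + 2) - F (m + 1)` are consecutive Chebyshev polynomials. -/
lemma F_add_two (m : ℕ) : F (m + 2) = X * F (m + 1) - F m := by
  induction m with
  | zero =>
    rw [F_succ, F_succ, F_zero]
    simp only [TT]
    ring
  | succ m ih =>
    have hTT : TT (m + 3) = X * TT (m + 2) - TT (m + 1) := rfl
    linear_combination F_succ (m + 2) - X * F_succ (m + 1) + F_succ m + ih + hTT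

theorem stmt_4 (n : ℕ) (hn : 1 ≤ n) :
    F (n + 1) = Polynomial.X * F n - F (n - 1) := by
  obtain ⟨m, rfl⟩ := Nat.exists_eq_add_of_le' hn
  exact F_add_two m
end

section
/- The generating function of the polynomials F_n satisfies ∑_{n≥0} F_n(X) t^n = (1 + t)/(1 − Xt + t²) as formal power series; equivalently, (1 − Xt + t²)·∑_{n≥0} F_n(X) t^n = 1 + t in (ℤ[X])[[t]]. -/
open Polynomial

lemma F_rec (n : ℕ) : F (n + 2) = Polynomial.X * F (n + 1) - F n := by
  induction n with
  | zero =>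
      show F 2 = _
      simp [F, TT, Finset.sum_Icc_succ_top, show (1:ℕ) ≤ 2 by norm_num]
      ring
  | succ n ih =>
      have h3 : TT (n + 3) = Polynomial.X * TT (n + 2) - TT (n + 1) := rfl
      have e1 := F_succ (n + 2)
      have e2 := F_succ (n + 1)
      have e3 := F_succ n
      show F (n + 3) = Polynomial.X * F (n + 2) - F (n + 1)
      linear_combination e1 + h3 - Polynomial.X * e2 + e3 + ih

theorem stmt_5 :
    (1 - (PowerSeries.C : ℤ[X] →+* PowerSeries ℤ[X]) Polynomial.X * PowerSeries.X + PowerSeries.X ^ 2) *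
        PowerSeries.mk (fun n => F n)
      = 1 + PowerSeries.X := by
  have key : (1 - (PowerSeries.C : ℤ[X] →+* PowerSeries ℤ[X]) Polynomial.X * PowerSeries.X + PowerSeries.X ^ 2) *
        PowerSeries.mk (fun n => F n)
      = PowerSeries.mk (fun n => F n)
        - (PowerSeries.C : ℤ[X] →+* PowerSeries ℤ[X]) Polynomial.X * PowerSeries.mk (fun n => F n) * PowerSeries.X
        + PowerSeries.mk (fun n => F n) * PowerSeries.X ^ 2 := by ring
  rw [key]
  refine PowerSeries.ext fun n => ?_
  match n with
  | 0 =>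
      simp [F, PowerSeries.coeff_zero_mul_X]
  | 1 =>
      have hA : PowerSeries.coeff 1
          ((PowerSeries.C : ℤ[X] →+* PowerSeries ℤ[X]) Polynomial.X * PowerSeries.mk (fun n => F n) * PowerSeries.X)
          = Polynomial.X * F 0 := by
        rw [show (1:ℕ) = 0 + 1 from rfl, PowerSeries.coeff_succ_mul_X]
        simp
      have hB : PowerSeries.coeff 1
          (PowerSeries.mk (fun n => F n) * PowerSeries.X ^ 2) = 0 := by
        rw [pow_two, ← mul_assoc, show (1:ℕ) = 0 + 1 from rfl,
          PowerSeries.coeff_succ_mul_X, PowerSeries.coeff_zero_mul_X]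
      simp only [map_add, map_sub, hA, hB, PowerSeries.coeff_mk]
      simp [F, Finset.Icc_self, TT, PowerSeries.coeff_one, PowerSeries.coeff_X]
  | (n + 2) =>
      have h2 : PowerSeries.coeff (n + 2)
          (PowerSeries.mk (fun n => F n) * PowerSeries.X ^ 2) = F n := by
        rw [pow_two, ← mul_assoc, PowerSeries.coeff_succ_mul_X,
          PowerSeries.coeff_succ_mul_X, PowerSeries.coeff_mk]
      simp only [map_add, map_sub, PowerSeries.coeff_succ_mul_X, PowerSeries.coeff_mk,
        map_mul, PowerSeries.coeff_C_mul, h2]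
      rw [F_rec n]
      simp [PowerSeries.coeff_one, PowerSeries.coeff_X]
end

section
/- For n ≥ 1, F_n(X) = ∑_{0 ≤ m ≤ n/2} (−1)^m · C(n−m, m) · X^{n−2m} + ∑_{0 ≤ m ≤ (n−1)/2} (−1)^m · C(n−m−1, m) · X^{n−2m−1}, where C(a,b) denotes the binomial coefficient. -/
open Polynomial

/-!
The monic Chebyshev polynomials `𝕋_k` are Mathlib's `Chebyshev.C k`, and they satisfy
`C_k = S_k - S_{k-2}`, where `S` are the monic Chebyshev polynomials of the second kind
(`S_{-1} = 0`). Hence the sum defining `F_n` telescopes to `S_n + S_{n-1}`, and the claim is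
the binomial expansion `S_n = ∑ (-1)^m C(n-m, m) X^(n-2m)`, which follows from the recurrence
`S_{n+2} = X S_{n+1} - S_n` by Pascal's rule.
-/

namespace Polynomial.Chebyshev

variable {R : Type*} [CommRing R]

variable (R) in
theorem C_eq_S_sub_S (n : ℤ) : C R n = S R n - S R (n - 2) := by
  linear_combination (norm := ring_nf) C_eq_S_sub_X_mul_S R n + S_eq R n

theorem sum_Icc_C (n : ℕ) : ∑ k ∈ Finset.Icc 1 n, C R k = S R n + S R (n - 1) - 1 := by
  induction n with
  | zero => simp
  | succ n ih =>
    rw [Finset.sum_Icc_succ_top (by omega), ih, C_eq_S_sub_S]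
    push_cast
    ring_nf

variable (R) in
noncomputable def sSummand (n m : ℕ) : R[X] :=
  Polynomial.C ((-1) ^ m * ((n - m).choose m : R)) * X ^ (n - 2 * m)

theorem sSummand_eq_zero {n m : ℕ} (h : n < 2 * m) : sSummand R n m = 0 := by
  simp [sSummand, Nat.choose_eq_zero_of_lt (by omega : n - m < m)]

theorem sum_range_sSummand_of_le {n N : ℕ} (h : n / 2 + 1 ≤ N) :
    ∑ m ∈ Finset.range N, sSummand R n m = ∑ m ∈ Finset.range (n / 2 + 1), sSummand R n m :=
  (Finset.sum_subset (Finset.range_subset_range.mpr h) fun m hN hn => by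
    simp only [Finset.mem_range] at hN hn
    exact sSummand_eq_zero (by omega)).symm

theorem sSummand_add_two {n m : ℕ} (h : 2 * m ≤ n) :
    sSummand R (n + 2) (m + 1) = X * sSummand R (n + 1) (m + 1) - sSummand R n m := by
  have hX : X * sSummand R (n + 1) (m + 1) =
      Polynomial.C ((-1) ^ (m + 1) * ((n - m).choose (m + 1) : R)) * X ^ (n - 2 * m) := by
    -- for `n = 2 * m` the exponent `n + 1 - 2 * (m + 1)` is truncated, but both sides vanish
    rcases h.eq_or_lt with rfl | _
    · simp [sSummand, show 2 * m + 1 - (m + 1) = m by omega, show 2 * m - m = m by omega]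
    · rw [sSummand, mul_left_comm, ← pow_succ', show n + 1 - (m + 1) = n - m by omega,
        show n + 1 - 2 * (m + 1) + 1 = n - 2 * m by omega]
  rw [hX, sSummand, sSummand, show n + 2 - (m + 1) = n - m + 1 by omega,
    show n + 2 - 2 * (m + 1) = n - 2 * m by omega, Nat.choose_succ_succ']
  simp only [map_mul, map_pow, map_neg, map_one, Nat.cast_add, map_add]
  ring

theorem sum_sSummand_add_two (n : ℕ) :
    ∑ m ∈ Finset.range ((n + 2) / 2 + 1), sSummand R (n + 2) m =
      X * ∑ m ∈ Finset.range ((n + 1) / 2 + 1), sSummand R (n + 1) m -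
        ∑ m ∈ Finset.range (n / 2 + 1), sSummand R n m := by
  have h0 : sSummand R (n + 2) 0 = X * sSummand R (n + 1) 0 := by
    simp [sSummand, pow_succ']
  have hshift : ∀ m ∈ Finset.range (n / 2 + 1),
      sSummand R (n + 2) (m + 1) = X * sSummand R (n + 1) (m + 1) - sSummand R n m :=
    fun m hm => sSummand_add_two (by simp only [Finset.mem_range] at hm; omega)
  rw [show (n + 2) / 2 + 1 = n / 2 + 1 + 1 by omega,
    ← sum_range_sSummand_of_le (n := n + 1) (N := n / 2 + 1 + 1) (by omega),
    Finset.sum_range_succ' (sSummand R (n + 2)), Finset.sum_range_succ' (sSummand R (n + 1)),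
    Finset.sum_congr rfl hshift, h0, Finset.sum_sub_distrib, ← Finset.mul_sum]
  ring

theorem S_eq_sum_sSummand (n : ℕ) : S R n = ∑ m ∈ Finset.range (n / 2 + 1), sSummand R n m := by
  induction n using Nat.twoStepInduction with
  | zero => simp [sSummand]
  | one => simp [sSummand]
  | more n ih₀ ih₁ =>
    rw [sum_sSummand_add_two, ← ih₀, ← ih₁]
    push_cast
    exact S_add_two R n

end Polynomial.Chebyshev

open Polynomial.Chebyshev

theorem TT_eq_chebyshev_C (k : ℕ) : TT k = Chebyshev.C ℤ k := by
  induction k using Nat.twoStepInduction with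
  | zero => simp [TT]
  | one => simp [TT]
  | more k ih₀ ih₁ =>
    rw [TT, ih₀, ih₁]
    push_cast
    exact (C_add_two ℤ k).symm

theorem F_eq_S_add_S (n : ℕ) : F n = S ℤ n + S ℤ (n - 1) := by
  simp only [F, TT_eq_chebyshev_C, sum_Icc_C]
  ring

theorem stmt_7 (n : ℕ) (hn : 1 ≤ n) :
    F n =
      (∑ m ∈ Finset.range (n / 2 + 1),
        Polynomial.C ((-1) ^ m * ((n - m).choose m : ℤ)) * Polynomial.X ^ (n - 2 * m)) +
      (∑ m ∈ Finset.range ((n - 1) / 2 + 1),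
        Polynomial.C ((-1) ^ m * ((n - m - 1).choose m : ℤ)) * Polynomial.X ^ (n - 2 * m - 1)) := by
  obtain ⟨k, rfl⟩ : ∃ k, n = k + 1 := ⟨n - 1, by omega⟩
  rw [F_eq_S_add_S, Nat.add_sub_cancel, show ((k + 1 : ℕ) : ℤ) - 1 = k by push_cast; ring,
    S_eq_sum_sSummand, S_eq_sum_sSummand]
  congr 1
  refine Finset.sum_congr rfl fun m _ => ?_
  rw [sSummand, show k + 1 - m - 1 = k - m by omega,
    show k + 1 - 2 * m - 1 = k - 2 * m by omega]
end

section
/- For every n ≥ 1, the map sending an odd divisor d of n to the pair (a, h) = (n/d − (d+1)/2, d) is a bijection from the set of odd divisors of n onto the set of pairs (a, h) with h ≥ 1 odd and h(h + 2a + 1) = 2n. -/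
/-! For odd `h` the factor `h + 2a + 1` is even, so `h (h + 2a + 1) = 2n` says exactly that
`n = h · (a + (h + 1)/2)`. Hence `h` is an odd divisor of `n` with cofactor `a + (h + 1)/2`,
and `a` is recovered from `h` as `n/h - (h + 1)/2`. -/

namespace Int

theorem mul_add_two_mul_add_one_eq_two_mul_iff {h a n : ℤ} (hh : Odd h) :
    h * (h + 2 * a + 1) = 2 * n ↔ n = h * (a + (h + 1) / 2) := by
  have hsucc : (h + 1) / 2 * 2 = h + 1 := Int.ediv_mul_cancel (even_iff_two_dvd.mp hh.add_one)
  have hfactor : h + 2 * a + 1 = 2 * (a + (h + 1) / 2) := by linarith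
  rw [hfactor, mul_left_comm, mul_right_inj' two_ne_zero, eq_comm]

theorem mul_add_two_mul_ediv_sub_add_one_eq_two_mul {d n : ℤ} (hodd : Odd d)
    (hdvd : d ∣ n) : d * (d + 2 * (n / d - (d + 1) / 2) + 1) = 2 * n := by
  rw [mul_add_two_mul_add_one_eq_two_mul_iff hodd, sub_add_cancel,
    Int.mul_ediv_cancel' hdvd]

end Int

theorem stmt_13_general (n : ℤ) :
    Set.BijOn (fun d : ℤ => (n / d - (d + 1) / 2, d))
      {d : ℤ | 0 < d ∧ Odd d ∧ d ∣ n}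
      {p : ℤ × ℤ | 0 < p.2 ∧ Odd p.2 ∧ p.2 * (p.2 + 2 * p.1 + 1) = 2 * n} := by
  refine ⟨?_, fun d₁ _ d₂ _ h => congrArg Prod.snd h, ?_⟩
  · rintro d ⟨hd, hodd, hdvd⟩
    exact ⟨hd, hodd, Int.mul_add_two_mul_ediv_sub_add_one_eq_two_mul hodd hdvd⟩
  · rintro ⟨a, h⟩ ⟨hh, hodd, heq⟩
    have hn : n = h * (a + (h + 1) / 2) := (Int.mul_add_two_mul_add_one_eq_two_mul_iff hodd).mp heq
    refine ⟨h, ⟨hh, hodd, ⟨_, hn⟩⟩, ?_⟩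
    simp only [hn, Int.mul_ediv_cancel_left _ hh.ne', add_sub_cancel_right]

theorem stmt_13 (n : ℤ) (hn : 1 ≤ n) :
    Set.BijOn (fun d : ℤ => (n / d - (d + 1) / 2, d))
      {d : ℤ | 0 < d ∧ Odd d ∧ d ∣ n}
      {p : ℤ × ℤ | 0 < p.2 ∧ Odd p.2 ∧ p.2 * (p.2 + 2 * p.1 + 1) = 2 * n} :=
  stmt_13_general n
end

section
/- Define P̂_n ∈ ℤ[X] by P̂_n = ∑_{d | n, d odd, r_n(d) ≥ 0} F_{r_n(d)} − ∑_{d | n, d odd, r_n(d) < 0} F_{−r_n(d) − 1}, where r_n(d) = n/d − (d+1)/2. Then in the Laurent polynomial ring, (q−1)²·q^{n−1}·(P̂_n evaluated at q + q^{−1}) · q^{−(n-1)} · q^{−1} equals ∑_{d | n, d odd} (q^{n/d − (d−1)/2} + q^{−n/d + (d−1)/2} − q^{n/d − (d+1)/2} − q^{−n/d + (d+1)/2}); that is, q^{−1}(q−1)²·P̂_n(q + q^{−1}) equals the displayed divisor sum. -/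
/-!
Since `TT k (q + q⁻¹) = q ^ k + q ^ (-k)`, we get `F m (q + q⁻¹) = ∑_{|j| ≤ m} q ^ j`, and
multiplying by `q⁻¹ (q - 1) ^ 2` telescopes this to `q ^ (m + 1) - q ^ m - q ^ (-m) + q ^ (-m - 1)`.
This expression changes sign under `m ↦ -m - 1`, which accounts for the divisors with `r n d < 0`.
-/

open Polynomial LaurentPolynomial

def r (n d : ℕ) : ℤ := ((n / d : ℕ) : ℤ) - (((d + 1) / 2 : ℕ) : ℤ)

noncomputable def Phat (n : ℕ) : ℤ[X] :=
  (∑ d ∈ n.divisors.filter (fun d => Odd d ∧ 0 ≤ r n d), F (r n d).toNat) -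
  (∑ d ∈ n.divisors.filter (fun d => Odd d ∧ r n d < 0), F (-(r n d) - 1).toNat)

/-- Extends `F` to negative indices so that `signedF x (q + q⁻¹) = ∑_{|j| ≤ x} q ^ j` with the
sum read as signed (`-∑_{x < j < -x}` for `x < 0`). -/
noncomputable def signedF (x : ℤ) : ℤ[X] :=
  if 0 ≤ x then F x.toNat else -F (-x - 1).toNat

theorem Phat_eq_sum_signedF (n : ℕ) :
    Phat n = ∑ d ∈ n.divisors.filter Odd, signedF (r n d) := by
  simp only [signedF, Finset.sum_ite, Finset.filter_filter, not_le, Finset.sum_neg_distrib,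
    Phat, sub_eq_add_neg]

section Laurent

variable {R : Type*} [CommRing R]

theorem aeval_TT : ∀ k : ℕ,
    aeval (T 1 + T (-1) : R[T;T⁻¹]) (TT k) = T (k : ℤ) + T (-(k : ℤ))
  | 0 => by
    rw [TT, map_ofNat, Nat.cast_zero, neg_zero, T_zero]
    ring
  | 1 => by simp [TT]
  | (k + 2) => by
    simp only [TT, map_sub, map_mul, aeval_X, aeval_TT (k + 1), aeval_TT k, add_mul, mul_add,
      ← T_add]
    push_cast
    ring_nf

noncomputable def diffTerm (x : ℤ) : R[T;T⁻¹] :=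
  T (x + 1) - T x - T (-x) + T (-x - 1)

theorem diffTerm_neg_sub_one (x : ℤ) : (diffTerm (-x - 1) : R[T;T⁻¹]) = -diffTerm x := by
  simp only [diffTerm]
  ring_nf

theorem mul_aeval_F (m : ℕ) :
    T (-1) * (T 1 - 1) ^ 2 * aeval (T 1 + T (-1) : R[T;T⁻¹]) (F m) = diffTerm (m : ℤ) := by
  have expand : (T (-1) * (T 1 - 1) ^ 2 : R[T;T⁻¹]) = T 1 - 2 + T (-1) := by
    simp only [sq, mul_sub, sub_mul, ← T_add, mul_one, one_mul]
    norm_num [T_zero]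
    ring
  rw [expand]
  induction m with
  | zero =>
    simp only [F, diffTerm]
    norm_num [T_zero]
    ring
  | succ m ih =>
    rw [F, Finset.sum_Icc_succ_top (by omega), ← add_assoc, ← F, map_add, mul_add, ih,
      aeval_TT]
    simp only [diffTerm, add_mul, sub_mul, mul_add, ← T_add, two_mul]
    push_cast
    ring_nf

theorem mul_aeval_signedF (x : ℤ) :
    T (-1) * (T 1 - 1) ^ 2 * aeval (T 1 + T (-1) : R[T;T⁻¹]) (signedF x) = diffTerm x := by
  unfold signedF
  split_ifs with hx
  · rw [mul_aeval_F, Int.toNat_of_nonneg hx]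
  · rw [map_neg, mul_neg, mul_aeval_F, Int.toNat_of_nonneg (by omega), diffTerm_neg_sub_one,
      neg_neg]

theorem diffTerm_r {n d : ℕ} (hd : Odd d) :
    (diffTerm (r n d) : R[T;T⁻¹]) =
      T (((n / d : ℕ) : ℤ) - (((d - 1) / 2 : ℕ) : ℤ)) +
        T (-((n / d : ℕ) : ℤ) + (((d - 1) / 2 : ℕ) : ℤ)) -
        T (((n / d : ℕ) : ℤ) - (((d + 1) / 2 : ℕ) : ℤ)) -
        T (-((n / d : ℕ) : ℤ) + (((d + 1) / 2 : ℕ) : ℤ)) := by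
  obtain ⟨k, rfl⟩ := hd
  have h₁ : (2 * k + 1 - 1) / 2 = k := by omega
  have h₂ : (2 * k + 1 + 1) / 2 = k + 1 := by omega
  rw [diffTerm, r, h₁, h₂]
  push_cast
  ring_nf

end Laurent

theorem stmt_15_general (n : ℕ) :
    LaurentPolynomial.T (-1) * (LaurentPolynomial.T 1 - 1) ^ 2 *
        Polynomial.aeval
          (LaurentPolynomial.T 1 + LaurentPolynomial.T (-1) : LaurentPolynomial ℤ) (Phat n)
      = ∑ d ∈ n.divisors.filter (fun d => Odd d),
          (LaurentPolynomial.T (((n / d : ℕ) : ℤ) - (((d - 1) / 2 : ℕ) : ℤ)) +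
           LaurentPolynomial.T (-((n / d : ℕ) : ℤ) + (((d - 1) / 2 : ℕ) : ℤ)) -
           LaurentPolynomial.T (((n / d : ℕ) : ℤ) - (((d + 1) / 2 : ℕ) : ℤ)) -
           LaurentPolynomial.T (-((n / d : ℕ) : ℤ) + (((d + 1) / 2 : ℕ) : ℤ))) := by
  rw [Phat_eq_sum_signedF, map_sum, Finset.mul_sum]
  refine Finset.sum_congr rfl fun d hd => ?_
  rw [mul_aeval_signedF, diffTerm_r (Finset.mem_filter.mp hd).2]

theorem stmt_15 (n : ℕ) (hn : 1 ≤ n) :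
    LaurentPolynomial.T (-1) * (LaurentPolynomial.T 1 - 1) ^ 2 *
        Polynomial.aeval
          (LaurentPolynomial.T 1 + LaurentPolynomial.T (-1) : LaurentPolynomial ℤ) (Phat n)
      = ∑ d ∈ n.divisors.filter (fun d => Odd d),
          (LaurentPolynomial.T (((n / d : ℕ) : ℤ) - (((d - 1) / 2 : ℕ) : ℤ)) +
           LaurentPolynomial.T (-((n / d : ℕ) : ℤ) + (((d - 1) / 2 : ℕ) : ℤ)) -
           LaurentPolynomial.T (((n / d : ℕ) : ℤ) - (((d + 1) / 2 : ℕ) : ℤ)) -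
           LaurentPolynomial.T (-((n / d : ℕ) : ℤ) + (((d + 1) / 2 : ℕ) : ℤ))) :=
  stmt_15_general n
end

section
/- If n = 2^a for some a ≥ 0, then P̂_n = F_{n−1}, where P̂_n := ∑_{d | n, d odd, r_n(d) ≥ 0} F_{r_n(d)} − ∑_{d | n, d odd, r_n(d) < 0} F_{−r_n(d)−1} with r_n(d) = n/d − (d+1)/2. Conversely, if n is not a power of 2, then P̂_n ≠ F_{n−1}. -/
open Polynomial LaurentPolynomial

/-! ### Auxiliary machinery -/

noncomputable def Φ : ℤ[X] →ₐ[ℤ] LaurentPolynomial ℤ := Polynomial.aeval (T 1 + T (-1))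

noncomputable def coeffL (k : ℤ) : LaurentPolynomial ℤ →+ ℤ :=
  (Finsupp.applyAddHom k).comp AddMonoidAlgebra.coeffAddEquiv.toAddMonoidHom

lemma coeffL_T (k j : ℤ) : coeffL k (T j) = if j = k then 1 else 0 := T_apply k j

def eF (n d : ℕ) : ℤ := r n d + 1

lemma phiTT : ∀ k : ℕ, Φ (TT k) = T k + T (-k)
  | 0 => by
      show Φ 2 = _
      rw [show ((2:ℤ[X])) = (1+1 : ℤ[X]) by norm_num, map_add, map_one]
      simp
  | 1 => by simp [TT, Φ]
  | (k+2) => by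
      have h1 := phiTT (k+1)
      have h0 := phiTT k
      show Φ (Polynomial.X * TT (k+1) - TT k) = _
      rw [map_sub, map_mul, h1, h0]
      have hX : Φ Polynomial.X = T 1 + T (-1) := by simp [Φ]
      rw [hX]
      push_cast
      rw [add_mul, mul_add, mul_add, ← T_add, ← T_add, ← T_add, ← T_add]
      ring_nf

lemma Fsucc (k : ℕ) : F (k+1) = F k + TT (k+1) := by
  unfold F
  rw [Finset.sum_Icc_succ_top (by omega)]
  ring

lemma phiF (k : ℕ) : (T 1 - 1) * Φ (F k) = T ((k:ℤ)+1) - T (-(k:ℤ)) := by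
  induction k with
  | zero =>
      have : F 0 = 1 := by unfold F; simp
      rw [this, map_one, mul_one]
      simp
  | succ k ih =>
      rw [Fsucc, map_add, mul_add, ih, phiTT]
      push_cast
      rw [mul_add, sub_mul, sub_mul, ← T_add, ← T_add]
      ring_nf

lemma hposL (ρ : ℤ) (h : 0 ≤ ρ) : (T 1 - 1) * Φ (F ρ.toNat) = T (ρ+1) - T (-ρ) := by
  rw [phiF, Int.toNat_of_nonneg h]

lemma hnegL (ρ : ℤ) (h : ρ < 0) : (T 1 - 1) * Φ (F (-ρ-1).toNat) = T (-ρ) - T (ρ+1) := by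
  rw [phiF, Int.toNat_of_nonneg (by omega)]
  ring_nf

lemma r_one (n : ℕ) : r n 1 = (n:ℤ) - 1 := by simp [r]

lemma forward (a : ℕ) : Phat (2^a) = F (2^a - 1) := by
  have hpos : (1:ℕ) ≤ 2^a := Nat.one_le_two_pow
  have hd : ∀ d : ℕ, d ∣ 2^a → Odd d → d = 1 := by
    intro d hdvd hodd
    obtain ⟨i, hi, rfl⟩ := (Nat.dvd_prime_pow Nat.prime_two).mp hdvd
    rcases Nat.eq_zero_or_pos i with h | h
    · simp [h]
    · exact absurd hodd (by simp [Nat.odd_iff, Nat.pow_mod, h.ne'])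
  have h1 : (2^a).divisors.filter (fun d => Odd d ∧ 0 ≤ r (2^a) d) = {1} := by
    ext d
    simp only [Finset.mem_filter, Nat.mem_divisors, Finset.mem_singleton]
    constructor
    · rintro ⟨⟨hdvd, _⟩, hodd, _⟩; exact hd d hdvd hodd
    · rintro rfl
      refine ⟨⟨one_dvd _, by positivity⟩, odd_one, ?_⟩
      rw [r_one]; omega
  have h2 : (2^a).divisors.filter (fun d => Odd d ∧ r (2^a) d < 0) = ∅ := by
    ext d
    simp only [Finset.mem_filter, Nat.mem_divisors, Finset.notMem_empty, iff_false, not_and]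
    rintro ⟨hdvd, _⟩ hodd
    rcases hd d hdvd hodd with rfl
    rw [r_one]; omega
  unfold Phat
  rw [h1, h2, Finset.sum_empty, sub_zero, Finset.sum_singleton]
  congr 1
  rw [r_one]
  omega

lemma keylem (n : ℕ) (hn : 1 ≤ n) (h : Phat n = F (n-1)) :
    ∑ d ∈ n.divisors.filter (fun d => Odd d), ((T (r n d + 1) : LaurentPolynomial ℤ) - T (-(r n d)))
      = T (n:ℤ) - T (1-(n:ℤ)) := by
  have hc := congrArg (fun P => (T 1 - 1) * Φ P) h
  unfold Phat at hc
  rw [map_sub, map_sum, map_sum, mul_sub, Finset.mul_sum, Finset.mul_sum] at hc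
  rw [← Finset.sum_filter_add_sum_filter_not (n.divisors.filter (fun d => Odd d)) (fun d => 0 ≤ r n d)]
  rw [Finset.filter_filter, Finset.filter_filter]
  simp only [not_le]
  have e1 : ∑ d ∈ n.divisors.filter (fun d => Odd d ∧ 0 ≤ r n d),
      ((T (r n d + 1) : LaurentPolynomial ℤ) - T (-(r n d)))
      = ∑ d ∈ n.divisors.filter (fun d => Odd d ∧ 0 ≤ r n d), (T 1 - 1) * Φ (F (r n d).toNat) := by
    refine Finset.sum_congr rfl fun d hd => ?_
    rw [hposL _ (Finset.mem_filter.mp hd).2.2]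
  have e2 : ∑ d ∈ n.divisors.filter (fun d => Odd d ∧ r n d < 0),
      ((T (r n d + 1) : LaurentPolynomial ℤ) - T (-(r n d)))
      = -∑ d ∈ n.divisors.filter (fun d => Odd d ∧ r n d < 0), (T 1 - 1) * Φ (F (-(r n d) - 1).toNat) := by
    rw [← Finset.sum_neg_distrib]
    refine Finset.sum_congr rfl fun d hd => ?_
    rw [hnegL _ (Finset.mem_filter.mp hd).2.2]
    ring
  rw [e1, e2, ← sub_eq_add_neg, hc, phiF]
  have : ((n - 1 : ℕ) : ℤ) = (n : ℤ) - 1 := by omega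
  rw [this]
  ring_nf

lemma converse (n : ℕ) (hn : 1 ≤ n)
    (key : ∑ d ∈ n.divisors.filter (fun d => Odd d), ((T (r n d + 1) : LaurentPolynomial ℤ) - T (-(r n d)))
      = T (n:ℤ) - T (1-(n:ℤ)))
    (hpow : ¬ ∃ a : ℕ, n = 2^a) : False := by
  have hn0 : n ≠ 0 := by omega
  set D := n.divisors.filter (fun d => Odd d) with hD
  have key' : ∑ d ∈ D, ((T (eF n d) : LaurentPolynomial ℤ) - T (1 - eF n d)) = T (n:ℤ) - T (1-(n:ℤ)) := by
    rw [← key]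
    refine Finset.sum_congr rfl fun d _ => by rw [show (1:ℤ) - eF n d = -(r n d) by simp [eF], eF]
  obtain ⟨a, m, hnm, h2m⟩ : ∃ a m, 2^a * m = n ∧ ¬ 2 ∣ m :=
    ⟨n.factorization 2, n / 2^(n.factorization 2), Nat.ordProj_mul_ordCompl_eq_self n 2,
      Nat.not_dvd_ordCompl Nat.prime_two hn0⟩
  have hm0 : m ≠ 0 := by rintro rfl; rw [mul_zero] at hnm; omega
  have hmodd : Odd m := by rw [Nat.odd_iff]; omega
  have hm1 : m ≠ 1 := fun h1 => hpow ⟨a, by rw [← hnm, h1, mul_one]⟩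
  set p := m.minFac with hp
  have hpp : p.Prime := Nat.minFac_prime hm1
  have hpm : p ∣ m := Nat.minFac_dvd m
  have hple' : ∀ d, 2 ≤ d → d ∣ m → p ≤ d := fun d h2 hd => Nat.minFac_le_of_dvd h2 hd
  clear_value p
  have hp2 : 2 ≤ p := hpp.two_le
  have hpodd : Odd p := by
    rw [Nat.odd_iff]
    have : ¬ (2 ∣ p) := fun h => h2m (h.trans hpm)
    omega
  have hmn : m ∣ n := ⟨2^a, by rw [← hnm]; ring⟩
  have hpn : p ∣ n := hpm.trans hmn
  have hmD : m ∈ D := Finset.mem_filter.mpr ⟨Nat.mem_divisors.mpr ⟨hmn, hn0⟩, hmodd⟩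
  have hpD : p ∈ D := Finset.mem_filter.mpr ⟨Nat.mem_divisors.mpr ⟨hpn, hn0⟩, hpodd⟩
  have h1D : (1:ℕ) ∈ D := Finset.mem_filter.mpr ⟨Nat.mem_divisors.mpr ⟨one_dvd _, hn0⟩, odd_one⟩
  have hdvdm : ∀ d ∈ D, d ∣ m := by
    intro d hd
    obtain ⟨hdn, hdodd⟩ := Finset.mem_filter.mp hd
    have hdn' : d ∣ n := (Nat.mem_divisors.mp hdn).1
    have hcop : Nat.Coprime d (2^a) := (Nat.coprime_two_right.mpr hdodd).pow_right a
    refine hcop.dvd_of_dvd_mul_left ?_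
    rw [← hnm] at hdn'; exact hdn'
  have hdle : ∀ d ∈ D, d ≤ m := fun d hd => Nat.le_of_dvd (by omega) (hdvdm d hd)
  have hple : ∀ d ∈ D, d ≠ 1 → p ≤ d := by
    intro d hd hd1
    have hdd : d ∣ m := hdvdm d hd
    have hd0 : d ≠ 0 := by rintro rfl; exact hm0 (Nat.eq_zero_of_zero_dvd hdd)
    exact hple' d (by omega) hdd
  have eAnti : ∀ d1 ∈ D, ∀ d2 ∈ D, d1 < d2 → eF n d2 < eF n d1 := by
    intro d1 hd1 d2 hd2 hlt
    obtain ⟨hd1n, hd1odd⟩ := Finset.mem_filter.mp hd1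
    obtain ⟨hd2n, hd2odd⟩ := Finset.mem_filter.mp hd2
    have hd1pos : 0 < d1 := Nat.pos_of_mem_divisors hd1n
    have hdiv : n / d2 ≤ n / d1 := Nat.div_le_div_left (le_of_lt hlt) hd1pos
    rw [Nat.odd_iff] at hd1odd hd2odd
    simp only [eF, r]
    obtain ⟨A1, hA1⟩ : ∃ A, n / d1 = A := ⟨_, rfl⟩
    obtain ⟨A2, hA2⟩ : ∃ A, n / d2 = A := ⟨_, rfl⟩
    rw [hA1, hA2]; rw [hA1, hA2] at hdiv
    omega
  have emle : ∀ d ∈ D, eF n m ≤ eF n d := by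
    intro d hd
    rcases eq_or_lt_of_le (hdle d hd) with h | h
    · rw [h]
    · exact le_of_lt (eAnti d hd m hmD h)
  have eple : ∀ d ∈ D, d ≠ 1 → eF n d ≤ eF n p := by
    intro d hd hd1
    rcases eq_or_lt_of_le (hple d hd hd1) with h | h
    · rw [← h]
    · exact le_of_lt (eAnti p hpD d hd h)
  have e1 : eF n 1 = (n : ℤ) := by simp [eF, r]
  have key2 : ∑ d ∈ D.erase 1, ((T (eF n d) : LaurentPolynomial ℤ) - T (1 - eF n d)) = 0 := by
    have h := Finset.add_sum_erase D (fun d => (T (eF n d) : LaurentPolynomial ℤ) - T (1 - eF n d)) h1D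
    beta_reduce at h
    rw [key', e1] at h
    linear_combination h
  have hco : ∀ k : ℤ, ∑ d ∈ D.erase 1,
      ((if eF n d = k then (1:ℤ) else 0) - (if 1 - eF n d = k then 1 else 0)) = 0 := by
    intro k
    have h := congrArg (coeffL k) key2
    simpa only [map_sum, map_sub, coeffL_T, map_zero] using h
  have hpE : p ∈ D.erase 1 := Finset.mem_erase.mpr ⟨by omega, hpD⟩
  have hmE : m ∈ D.erase 1 := Finset.mem_erase.mpr ⟨hm1, hmD⟩
  rcases lt_trichotomy (eF n p) (1 - eF n m) with hlt | heq | hgt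
  · have hsum := hco (1 - eF n m)
    rw [Finset.sum_eq_single_of_mem m hmE ?_] at hsum
    · split_ifs at hsum <;> omega
    · intro b hb hbm
      obtain ⟨hb1, hbD⟩ := Finset.mem_erase.mp hb
      have h1 : eF n b ≤ eF n p := eple b hbD hb1
      have h2 : eF n m < eF n b := eAnti b hbD m hmD (lt_of_le_of_ne (hdle b hbD) hbm)
      rw [if_neg (by omega), if_neg (by omega)]; ring
  · obtain ⟨q, hq⟩ := hpm
    have hq0 : q ≠ 0 := by rintro rfl; rw [mul_zero] at hq; omega
    have hnmm : n / m = 2^a := Nat.div_eq_of_eq_mul_left (by omega) (by rw [← hnm])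
    obtain ⟨j, hj⟩ := hpodd
    obtain ⟨i, hi⟩ := hmodd
    have hp12 : (p + 1) / 2 = j + 1 := by omega
    have hm12 : (m + 1) / 2 = i + 1 := by omega
    have hE : eF n p + eF n m = 1 := by omega
    have hnp' : n / p = 2^a * q := Nat.div_eq_of_eq_mul_left (by omega) (by rw [← hnm, hq]; ring)
    simp only [eF, r, hnp', hnmm, hp12, hm12] at hE
    push_cast at hE
    rw [hi, hj] at hq
    have hmpq : (2*(i:ℤ)+1) = (2*(j:ℤ)+1) * (q:ℤ) := by exact_mod_cast hq
    have hz : ((2*(2:ℤ)^a - (2*(j:ℤ)+1)) * ((q:ℤ)+1)) = 0 := by linear_combination 2*hE + hmpq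
    have hq1 : ((q:ℤ)+1) ≠ 0 := by positivity
    have h2A : 2*(2:ℤ)^a = 2*(j:ℤ)+1 := by
      rcases mul_eq_zero.mp hz with h | h
      · linarith
      · exact absurd h hq1
    have hA1 : (1:ℤ) ≤ 2^a := one_le_pow₀ (by norm_num)
    omega
  · have hsum := hco (eF n p)
    rw [Finset.sum_eq_single_of_mem p hpE ?_] at hsum
    · split_ifs at hsum <;> omega
    · intro b hb hbp
      obtain ⟨hb1, hbD⟩ := Finset.mem_erase.mp hb
      have h1 : eF n b < eF n p := eAnti p hpD b hbD (lt_of_le_of_ne (hple b hbD hb1) (Ne.symm hbp))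
      have h2 : eF n m ≤ eF n b := emle b hbD
      rw [if_neg (by omega), if_neg (by omega)]; ring

theorem stmt_16 (n : ℕ) (hn : 1 ≤ n) :
    Phat n = F (n - 1) ↔ ∃ a : ℕ, n = 2 ^ a := by
  constructor
  · intro h
    by_contra hpow
    exact converse n hn (keylem n hn h) hpow
  · rintro ⟨a, rfl⟩
    exact forward a
end
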